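/- For all integers s, r ≥ 1 with r·s ≥ 3, the graph Q_{s,r} is a minor of the ((s+1)×(r·s))-cylindrical grid ring blowup. -/

import Mathlib

/-- `H` is a minor of `G`: there is a family of pairwise disjoint branch sets in `G`,
each inducing a connected subgraph, such that every edge of `H` is realized between
the corresponding branch sets. -/
def IsMinorOf {V W : Type*} (H : SimpleGraph V) (G : SimpleGraph W) : Prop :=
  ∃ X : V → Set W,
    (∀ v : V, (G.induce (X v)).Connected) ∧
    (∀ u v : V, u ≠ v → Disjoint (X u) (X v)) ∧
    (∀ u v : V, H.Adj u v → ∃ a ∈ X u, ∃ b ∈ X v, G.Adj a b)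

/-- The `(t × s)`-cylindrical grid: `t` concentric cycles of length `s`,
with vertical edges between consecutive cycles. -/
def cylGrid (t s : ℕ) : SimpleGraph (Fin t × ZMod s) :=
  SimpleGraph.fromRel fun p q =>
    (p.1 = q.1 ∧ q.2 = p.2 + 1) ∨ (p.2 = q.2 ∧ (q.1 : ℕ) = (p.1 : ℕ) + 1)

/-- The ring blowup of `(G, Q)`: for each `u ∈ Q` add a new vertex `v_u` adjacent to `u`,
to all neighbors of `u`, and to `v_w` for every neighbor `w ∈ Q` of `u`. -/
def ringBlowup {V : Type*} (G : SimpleGraph V) (Q : Set V) : SimpleGraph (V ⊕ ↥Q) :=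
  SimpleGraph.fromRel fun x y =>
    match x, y with
    | Sum.inl a, Sum.inl b => G.Adj a b
    | Sum.inl a, Sum.inr u => a = (u : V) ∨ G.Adj a (u : V)
    | Sum.inr u, Sum.inr w => G.Adj (u : V) (w : V)
    | _, _ => False

/-- The `(t × s)`-cylindrical grid ring blowup: the ring blowup of the
`(t × s)`-cylindrical grid at the vertex set of its outermost cycle. -/
def cylGridRingBlowup (t s : ℕ) : SimpleGraph ((Fin t × ZMod s) ⊕ ↥{p : Fin t × ZMod s | (p.1 : ℕ) = t - 1}) :=
  ringBlowup (cylGrid t s) {p : Fin t × ZMod s | (p.1 : ℕ) = t - 1}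

/-- The graph `Q_{s,r}`: the `(s × (s·r))`-grid together with `2r` terminal vertices
`t_i, t_i'` (encoded as `(i, 0)` and `(i, 1)`), where for each `i` both `t_i` and `t_i'`
are joined to the `i`-th block of `s` consecutive vertices of the first row. -/
def Qgraph (s r : ℕ) : SimpleGraph ((Fin s × Fin (s * r)) ⊕ (Fin r × Fin 2)) :=
  SimpleGraph.fromRel fun x y =>
    match x, y with
    | Sum.inl a, Sum.inl b =>
        (a.1 = b.1 ∧ (b.2 : ℕ) = (a.2 : ℕ) + 1) ∨ (a.2 = b.2 ∧ (b.1 : ℕ) = (a.1 : ℕ) + 1)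
    | Sum.inr u, Sum.inl a =>
        (a.1 : ℕ) = 0 ∧ (u.1 : ℕ) * s ≤ (a.2 : ℕ) ∧ (a.2 : ℕ) < (u.1 : ℕ) * s + s
    | _, _ => False


/-!
Row `i` of the `s × (s·r)` grid is placed on cycle `s - 1 - i` of the cylinder, so the first row
runs along the cycle just inside the outer one. The terminal `t_i` is the path formed by the `i`-th
block of `s` consecutive outer-cycle vertices and `t_i'` the path of their blowup copies: a
first-row vertex of that block is adjacent both to the outer vertex beyond it and to its copy.
-/

open Set SimpleGraph

namespace SimpleGraph

variable {W : Type*} (G : SimpleGraph W)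

lemma induce_singleton_connected (x : W) : (G.induce {x}).Connected :=
  { preconnected := .of_subsingleton }

lemma induce_image_Iio_connected {n : ℕ} (hn : 0 < n) (f : ℕ → W)
    (hf : ∀ k, k + 1 < n → G.Adj (f k) (f (k + 1))) : (G.induce (f '' Iio n)).Connected := by
  have hf0 : f 0 ∈ f '' Iio n := ⟨0, hn, rfl⟩
  have reach : ∀ k (hk : k < n),
      (G.induce (f '' Iio n)).Reachable ⟨f 0, hf0⟩ ⟨f k, k, hk, rfl⟩ := by
    intro k
    induction k with
    | zero => exact fun _ => .refl _
    | succ k ih => exact fun hk => (ih (by omega)).trans (Adj.reachable (hf k hk))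
  rw [connected_iff]
  refine ⟨?_, ⟨⟨f 0, hf0⟩⟩⟩
  rintro ⟨_, j, hj, rfl⟩ ⟨_, k, hk, rfl⟩
  exact (reach j hj).symm.trans (reach k hk)

end SimpleGraph

section cylGrid

variable {t m : ℕ}

lemma cylGrid_adj_col_succ (i : Fin t) {j : ℕ} (hj : j + 1 < m) :
    (cylGrid t m).Adj (i, (j : ZMod m)) (i, ((j + 1 : ℕ) : ZMod m)) := by
  refine (fromRel_adj _ _ _).2 ⟨fun h => ?_, .inl (.inl ⟨rfl, by push_cast; rfl⟩)⟩
  have h := congrArg ZMod.val (congrArg Prod.snd h)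
  rw [ZMod.val_cast_of_lt (by omega), ZMod.val_cast_of_lt hj] at h
  omega

lemma cylGrid_adj_of_row_succ {i i' : Fin t} (h : (i' : ℕ) = i + 1) (c : ZMod m) :
    (cylGrid t m).Adj (i, c) (i', c) := by
  refine (fromRel_adj _ _ _).2 ⟨fun he => ?_, .inl (.inr ⟨rfl, h⟩)⟩
  have := congrArg (fun p => (p.1 : ℕ)) he
  simp only at this
  omega

end cylGrid

section ringBlowup

variable {V : Type*} {G : SimpleGraph V} {Q : Set V}

lemma ringBlowup_adj_inl_inl {a b : V} (h : G.Adj a b) :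
    (ringBlowup G Q).Adj (.inl a) (.inl b) :=
  (fromRel_adj _ _ _).2 ⟨by simp [h.ne], .inl h⟩

lemma ringBlowup_adj_inl_inr {a : V} {u : Q} (h : G.Adj a u) :
    (ringBlowup G Q).Adj (.inl a) (.inr u) :=
  (fromRel_adj _ _ _).2 ⟨by simp, .inl (.inr h)⟩

lemma ringBlowup_adj_inr_inr {u w : Q} (h : G.Adj u w) :
    (ringBlowup G Q).Adj (.inr u) (.inr w) :=
  (fromRel_adj _ _ _).2 ⟨fun he => h.ne (congrArg Subtype.val (Sum.inr.inj he)), .inl h⟩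

end ringBlowup

lemma Nat.mul_add_lt_mul {r s i k : ℕ} (hi : i < r) (hk : k < s) : i * s + k < r * s :=
  calc i * s + k < (i + 1) * s := by rw [Nat.succ_mul]; omega
    _ ≤ r * s := Nat.mul_le_mul_right s hi

namespace Qgraph

variable (s r : ℕ)

abbrev BlowupVertex : Type :=
  (Fin (s + 1) × ZMod (r * s)) ⊕ ↥{p : Fin (s + 1) × ZMod (r * s) | (p.1 : ℕ) = s + 1 - 1}

def blockCol (i : Fin r) (k : ℕ) : ZMod (r * s) := ((i * s + k : ℕ) : ZMod (r * s))

def gridCell (a : Fin s × Fin (s * r)) : Fin (s + 1) × ZMod (r * s) :=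
  (a.1.rev.castSucc, (a.2 : ℕ))

def branchSet : (Fin s × Fin (s * r)) ⊕ (Fin r × Fin 2) → Set (BlowupVertex s r)
  | .inl a => {.inl (gridCell s r a)}
  | .inr (i, 0) => (fun k => .inl (Fin.last s, blockCol s r i k)) '' Iio s
  | .inr (i, 1) => (fun k => .inr ⟨(Fin.last s, blockCol s r i k), rfl⟩) '' Iio s

-- Branch sets lie in fibres of `blowupTag`: an outer-cycle vertex is tagged by the block containing
-- its column.
def blowupTag : BlowupVertex s r → ℕ × ℕ × ℕ
  | .inl (p, c) => if (p : ℕ) = s then (s, c.val / s, 0) else (p, c.val, 0)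
  | .inr u => (s, u.1.2.val / s, 1)

def vertexTag : (Fin s × Fin (s * r)) ⊕ (Fin r × Fin 2) → ℕ × ℕ × ℕ
  | .inl a => (a.1.rev, a.2, 0)
  | .inr (i, b) => (s, i, b)

variable {s r}

lemma vertexTag_injective : Function.Injective (vertexTag s r) := by
  rintro (a | ⟨i, b⟩) (a' | ⟨i', b'⟩) h <;>
    simp only [vertexTag, Fin.val_rev, Prod.mk.injEq] at h <;> grind

lemma blockCol_val_div (i : Fin r) {k : ℕ} (hk : k < s) : (blockCol s r i k).val / s = i := by
  rw [blockCol, ZMod.val_cast_of_lt (Nat.mul_add_lt_mul i.isLt hk)]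
  exact Nat.div_eq_of_lt_le (by omega) (by rw [Nat.succ_mul]; omega)

lemma blowupTag_eq_vertexTag {v : (Fin s × Fin (s * r)) ⊕ (Fin r × Fin 2)}
    {x : BlowupVertex s r} (hx : x ∈ branchSet s r v) : blowupTag s r x = vertexTag s r v := by
  rcases v with a | ⟨i, b⟩
  · obtain rfl := hx
    have hrow : (a.1.rev : ℕ) ≠ s := by
      rw [Fin.val_rev]
      omega
    have hcol : ((a.2 : ℕ) : ZMod (r * s)).val = a.2 :=
      ZMod.val_cast_of_lt (Nat.mul_comm s r ▸ a.2.isLt)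
    simp only [blowupTag, gridCell, Fin.val_castSucc, if_neg hrow, hcol, vertexTag]
  · fin_cases b <;> obtain ⟨k, hk, rfl⟩ := hx
      <;> simp [blowupTag, vertexTag, blockCol_val_div i hk]

lemma branchSet_disjoint {u v : (Fin s × Fin (s * r)) ⊕ (Fin r × Fin 2)} (huv : u ≠ v) :
    Disjoint (branchSet s r u) (branchSet s r v) :=
  Set.disjoint_left.2 fun _ hu hv => huv <| vertexTag_injective <|
    (blowupTag_eq_vertexTag hu).symm.trans (blowupTag_eq_vertexTag hv)

lemma branchSet_connected (hs : 0 < s) (v : (Fin s × Fin (s * r)) ⊕ (Fin r × Fin 2)) :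
    ((cylGridRingBlowup (s + 1) (r * s)).induce (branchSet s r v)).Connected := by
  rcases v with a | ⟨i, b⟩
  · exact induce_singleton_connected _ _
  · have hcol : ∀ k, k + 1 < s → (cylGrid (s + 1) (r * s)).Adj (Fin.last s, blockCol s r i k)
        (Fin.last s, blockCol s r i (k + 1)) := fun k hk =>
      cylGrid_adj_col_succ _ (Nat.mul_add_lt_mul i.isLt hk)
    fin_cases b
    · exact induce_image_Iio_connected _ hs _
        fun k hk => ringBlowup_adj_inl_inl (hcol k hk)
    · exact induce_image_Iio_connected _ hs _
        fun k hk => ringBlowup_adj_inr_inr (hcol k hk)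

lemma adj_gridCell {a a' : Fin s × Fin (s * r)}
    (h : (a.1 = a'.1 ∧ (a'.2 : ℕ) = a.2 + 1) ∨ (a.2 = a'.2 ∧ (a'.1 : ℕ) = a.1 + 1)) :
    (cylGridRingBlowup (s + 1) (r * s)).Adj (.inl (gridCell s r a)) (.inl (gridCell s r a')) := by
  apply ringBlowup_adj_inl_inl
  rcases h with ⟨hrow, hcol⟩ | ⟨hcol, hrow⟩
  · rw [gridCell, gridCell, hrow, hcol]
    exact cylGrid_adj_col_succ _ (hcol ▸ Nat.mul_comm s r ▸ a'.2.isLt)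
  · rw [gridCell, gridCell, hcol]
    refine (cylGrid_adj_of_row_succ ?_ _).symm
    simp only [Fin.val_castSucc, Fin.val_rev]
    omega

lemma exists_adj_branchSet_terminal {a : Fin s × Fin (s * r)} {i : Fin r} (b : Fin 2)
    (hrow : (a.1 : ℕ) = 0) (hlo : (i : ℕ) * s ≤ a.2) (hhi : (a.2 : ℕ) < i * s + s) :
    ∃ y ∈ branchSet s r (.inr (i, b)),
      (cylGridRingBlowup (s + 1) (r * s)).Adj (.inl (gridCell s r a)) y := by
  obtain ⟨k, hk⟩ := Nat.exists_eq_add_of_le hlo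
  have hcell : (cylGrid (s + 1) (r * s)).Adj (gridCell s r a) (Fin.last s, blockCol s r i k) := by
    rw [gridCell, blockCol, hk]
    refine cylGrid_adj_of_row_succ ?_ _
    simp only [Fin.val_castSucc, Fin.val_rev, Fin.val_last]
    omega
  fin_cases b
  · exact ⟨_, ⟨k, by simp only [mem_Iio]; omega, rfl⟩, ringBlowup_adj_inl_inl hcell⟩
  · exact ⟨_, ⟨k, by simp only [mem_Iio]; omega, rfl⟩, ringBlowup_adj_inl_inr hcell⟩

lemma exists_adj_branchSet {u v : (Fin s × Fin (s * r)) ⊕ (Fin r × Fin 2)}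
    (h : (Qgraph s r).Adj u v) : ∃ x ∈ branchSet s r u, ∃ y ∈ branchSet s r v,
      (cylGridRingBlowup (s + 1) (r * s)).Adj x y := by
  obtain ⟨-, h⟩ := (fromRel_adj _ _ _).1 h
  rcases u with a | ⟨i, b⟩ <;> rcases v with a' | ⟨i', b'⟩ <;> rcases h with h | h
    <;> try exact h.elim
  · exact ⟨_, rfl, _, rfl, adj_gridCell h⟩
  · exact ⟨_, rfl, _, rfl, (adj_gridCell h).symm⟩
  · obtain ⟨y, hy, hadj⟩ := exists_adj_branchSet_terminal b' h.1 h.2.1 h.2.2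
    exact ⟨_, rfl, y, hy, hadj⟩
  · obtain ⟨y, hy, hadj⟩ := exists_adj_branchSet_terminal b h.1 h.2.1 h.2.2
    exact ⟨y, hy, _, rfl, hadj.symm⟩

end Qgraph

theorem Qgraph_isMinor_cylGridRingBlowup_general (s r : ℕ) (hs : 1 ≤ s) :
    IsMinorOf (Qgraph s r) (cylGridRingBlowup (s + 1) (r * s)) :=
  ⟨Qgraph.branchSet s r, Qgraph.branchSet_connected hs, fun _ _ => Qgraph.branchSet_disjoint,
    fun _ _ => Qgraph.exists_adj_branchSet⟩

/-- For all `s, r ≥ 1` with `r·s ≥ 3`, the graph `Q_{s,r}` is a minor of the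
`((s+1) × (r·s))`-cylindrical grid ring blowup. -/
theorem Qgraph_isMinor_cylGridRingBlowup (s r : ℕ) (hs : 1 ≤ s) (hr : 1 ≤ r)
    (hrs : 3 ≤ r * s) :
    IsMinorOf (Qgraph s r) (cylGridRingBlowup (s + 1) (r * s)) :=
  Qgraph_isMinor_cylGridRingBlowup_general s r hs
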